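/- Let D be an Enriques diagram all of whose extremal vertices are free (each proximate to exactly one vertex). Then for every satellite vertex s of D, proximate to vertices u_1 and u_2, the dual-graph vertex s lies on the chain in Γ_D between u_1 and u_2; consequently no satellite vertex of D corresponds to an end of Γ_D adjacent only to vertices outside {u_1, u_2}. -/

import Mathlib

/-- An Enriques diagram: a finite rooted tree (partial order `le`, each non-root
vertex with immediate predecessor `pred`) with a proximity relation `prox`
satisfying the standard axioms. -/
structure EnriquesDiagram (V : Type) [Fintype V] [DecidableEq V] where
  le : V → V → Prop
  le_refl : ∀ a, le a a
  le_trans : ∀ a b c, le a b → le b c → le a c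
  le_antisymm : ∀ a b, le a b → le b a → a = b
  root : V
  root_le : ∀ v, le root v
  pred : V → V
  pred_le : ∀ v, v ≠ root → le (pred v) v
  pred_ne : ∀ v, v ≠ root → pred v ≠ v
  pred_max : ∀ v q, v ≠ root → le q v → q ≠ v → le q (pred v)
  prox : V → V → Prop
  prox_pred : ∀ v, v ≠ root → prox v (pred v)
  root_not_prox : ∀ q, ¬ prox root q
  prox_gt : ∀ p q, prox p q → le q p ∧ p ≠ q
  prox_at_most_two : ∀ p a b c, prox p a → prox p b → prox p c → a = b ∨ b = c ∨ a = c
  third_unique : ∀ p q a b, prox p q → prox a p → prox a q → prox b p → prox b q → a = b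
  prox_pred_prox : ∀ p q', p ≠ root → prox p q' → q' ≠ pred p → prox (pred p) q'

namespace EnriquesDiagram

variable {V : Type} [Fintype V] [DecidableEq V] (D : EnriquesDiagram V)

/-- Number of vertices of `D` proximate to `p`. -/
noncomputable def r (p : V) : ℕ := Set.ncard {q | D.prox q p}

/-- Weight of `p` in the dual graph: `r p + 1`. -/
noncomputable def omega (p : V) : ℕ := D.r p + 1

/-- `p` is extremal: it has no successor. -/
def Extremal (p : V) : Prop := ∀ q, D.le p q → q = p

/-- `p` is free: proximate to exactly one vertex. -/
def Free (p : V) : Prop := ∃! q, D.prox p q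

/-- `p` is satellite: proximate to two distinct vertices. -/
def Satellite (p : V) : Prop := ∃ q₁ q₂, q₁ ≠ q₂ ∧ D.prox p q₁ ∧ D.prox p q₂

/-- `p` is maximal among the vertices of `D` proximate to `q`. -/
def MaxProx (p q : V) : Prop := D.prox p q ∧ ∀ u, D.prox u q → D.le p u → u = p

/-- The dual graph `Γ_D`: `p` and `q` are adjacent iff one is maximal among the
vertices proximate to the other. -/
def dualGraph : SimpleGraph V where
  Adj p q := p ≠ q ∧ (D.MaxProx p q ∨ D.MaxProx q p)
  symm := by
    constructor
    intro p q h
    exact ⟨h.1.symm, h.2.symm⟩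
  loopless := by
    constructor
    intro p h
    exact h.1 rfl

end EnriquesDiagram

/-!
Let `p = pred s` and let `q` be the other vertex `s` is proximate to. Take a walk in `Γ_D` from
`q` to `p` and let `c` be the child of `q` below `p`. Edges of `Γ_D` join comparable vertices, so
the walk enters the subtree above `c` along an edge `x — y` with `y` maximal proximate to `x`,
and then `c` is proximate to `x` as well. If `x ≠ q`, then `c` is a satellite between `q` and `x`,
and by induction on the length the part of the walk from `q` to `x` already passes through `c`,
which is absurd. So `x = q` and `y` is the top of the chain of vertices proximate to `q`, which
lies above `s`. If `y ≠ s`, the child `t` of `s` below `y` is proximate to `s` and `q` only, so the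
walk can leave the subtree above `t` only through `s` or back through `q`, where induction applies.

For the second claim, `s` has a neighbour in `Γ_D` for each `u_i`: either `u_i` itself, or the top
of the chain proximate to `s` above the child of `s` proximate to `u_i`. Such children are distinct
for `u₁` and `u₂`, since no vertex is proximate to three others.
-/

namespace SimpleGraph.Walk

variable {V : Type} {G : SimpleGraph V}

theorem exists_eq_append_cons_boundary (P : V → Prop) {a b : V} (w : G.Walk a b)
    (ha : P a) (hb : ¬ P b) :
    ∃ (x y : V) (h : G.Adj x y) (w₁ : G.Walk a x) (w₂ : G.Walk y b),
      w = w₁.append (cons h w₂) ∧ (∀ v ∈ w₁.support, P v) ∧ ¬ P y := by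
  induction w with
  | nil => exact absurd ha hb
  | @cons a u b h w ih =>
    by_cases hu : P u
    · obtain ⟨x, y, hxy, w₁, w₂, rfl, hw₁, hy⟩ := ih hu hb
      refine ⟨x, y, hxy, cons h w₁, w₂, rfl, ?_, hy⟩
      simpa [ha] using hw₁
    · exact ⟨a, u, h, nil, w, rfl, by simpa using ha, hu⟩

end SimpleGraph.Walk

namespace EnriquesDiagram

variable {V : Type} [Fintype V] [DecidableEq V] (D : EnriquesDiagram V)

abbrev toPartialOrder : PartialOrder V where
  le := D.le
  le_refl := D.le_refl
  le_trans := D.le_trans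
  le_antisymm := D.le_antisymm

theorem pred_induction {P : V → Prop} (h : ∀ v, (v ≠ D.root → P (D.pred v)) → P v) (v : V) :
    P v := by
  let := D.toPartialOrder
  induction v using WellFoundedLT.induction with
  | _ v ih =>
    refine h v fun hv => ih _ ⟨D.pred_le v hv, fun hle => ?_⟩
    exact D.pred_ne v hv (D.le_antisymm _ _ (D.pred_le v hv) hle)

variable {D}

theorem ne_root_of_prox {a b : V} (h : D.prox a b) : a ≠ D.root :=
  fun e => D.root_not_prox b (e ▸ h)

theorem le_of_prox {a b : V} (h : D.prox a b) : D.le b a :=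
  (D.prox_gt a b h).1

theorem not_le_of_prox {a b : V} (h : D.prox a b) : ¬ D.le a b :=
  fun hab => (D.prox_gt a b h).2 (D.le_antisymm _ _ hab (le_of_prox h))

theorem ne_root_of_le_of_ne {a b : V} (hab : D.le a b) (hne : a ≠ b) : b ≠ D.root :=
  fun e => hne (D.le_antisymm _ _ hab (e ▸ D.root_le a))

theorem le_total_of_le {a x y : V} (hx : D.le x a) (hy : D.le y a) : D.le x y ∨ D.le y x := by
  induction a using D.pred_induction generalizing x y with
  | _ a ih =>
    by_cases hxa : x = a
    · exact Or.inr (hxa ▸ hy)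
    by_cases hya : y = a
    · exact Or.inl (hya ▸ hx)
    have ha : a ≠ D.root := ne_root_of_le_of_ne hx hxa
    exact ih ha (D.pred_max a x ha hx hxa) (D.pred_max a y ha hy hya)

theorem eq_of_pred_eq_of_le {a b : V} (hab : D.pred a = D.pred b) (ha : a ≠ D.root)
    (hb : b ≠ D.root) (hle : D.le a b) : a = b := by
  by_contra hne
  have hapa : D.le a (D.pred a) := hab ▸ D.pred_max b a hb hle hne
  exact D.pred_ne a ha (D.le_antisymm _ _ (D.pred_le a ha) hapa)

theorem eq_of_pred_eq_of_le_of_le {a b x : V} (hab : D.pred a = D.pred b) (ha : a ≠ D.root)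
    (hb : b ≠ D.root) (hax : D.le a x) (hbx : D.le b x) : a = b := by
  rcases le_total_of_le hax hbx with h | h
  · exact eq_of_pred_eq_of_le hab ha hb h
  · exact (eq_of_pred_eq_of_le hab.symm hb ha h).symm

theorem prox_of_le_of_not_le {v w z : V} (hvw : D.prox v w) (hzv : D.le z v)
    (hzw : ¬ D.le z w) : D.prox z w := by
  induction v using D.pred_induction with
  | _ v ih =>
    by_cases hvz : z = v
    · exact hvz ▸ hvw
    have hv : v ≠ D.root := ne_root_of_prox hvw
    have hzp : D.le z (D.pred v) := D.pred_max v z hv hzv hvz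
    exact ih hv (D.prox_pred_prox v w hv hvw fun e => hzw (e ▸ hzp)) hzp

theorem exists_pred_eq_of_le {q p : V} (hqp : D.le q p) (hne : q ≠ p) :
    ∃ c, D.pred c = q ∧ c ≠ D.root ∧ D.le c p := by
  induction p using D.pred_induction with
  | _ p ih =>
    have hp : p ≠ D.root := ne_root_of_le_of_ne hqp hne
    by_cases hpq : D.pred p = q
    · exact ⟨p, hpq, hp, D.le_refl p⟩
    obtain ⟨c, hcq, hc, hcp⟩ := ih hp (D.pred_max p q hp hqp hne) (Ne.symm hpq)
    exact ⟨c, hcq, hc, D.le_trans _ _ _ hcp (D.pred_le p hp)⟩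

theorem exists_pred_eq_prox {v w s : V} (hvw : D.prox v w) (hsv : D.le s v) (hne : s ≠ v)
    (hsw : ¬ D.le s w) : ∃ t, D.pred t = s ∧ D.prox t w ∧ D.le t v := by
  obtain ⟨t, hts, ht, htv⟩ := exists_pred_eq_of_le hsv hne
  have hst : D.le s t := hts ▸ D.pred_le t ht
  exact ⟨t, hts, prox_of_le_of_not_le hvw htv fun h => hsw (D.le_trans _ _ _ hst h), htv⟩

/-- The axiom `third_unique` keeps the vertices proximate to `q` from branching. -/
theorem le_total_of_prox {u v c q : V} (huq : D.prox u q) (hvq : D.prox v q) (hcq : D.prox c q)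
    (hcu : D.le c u) (hcv : D.le c v) : D.le u v ∨ D.le v u := by
  induction u using D.pred_induction with
  | _ u ih =>
    by_cases huc : c = u
    · exact Or.inl (huc ▸ hcv)
    have hu : u ≠ D.root := ne_root_of_prox huq
    have hcp : D.le c (D.pred u) := D.pred_max u c hu hcu huc
    have hpq : D.prox (D.pred u) q :=
      D.prox_pred_prox u q hu huq fun e => not_le_of_prox hcq (e ▸ hcp)
    rcases ih hu hpq hcp with h | h
    · by_cases hvp : v = D.pred u
      · exact Or.inr (hvp ▸ D.pred_le u hu)
      obtain ⟨t, htp, htq, htv⟩ := exists_pred_eq_prox hvq h (Ne.symm hvp) (not_le_of_prox hpq)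
      have htp' : D.prox t (D.pred u) := htp ▸ D.prox_pred _ (ne_root_of_prox htq)
      have htu : t = u := D.third_unique _ q t u hpq htp' htq (D.prox_pred u hu) huq
      exact Or.inl (htu ▸ htv)
    · exact Or.inr (D.le_trans _ _ _ h (D.pred_le u hu))

theorem exists_maxProx_le {u s : V} (hus : D.prox u s) : ∃ m, D.MaxProx m s ∧ D.le u m := by
  let := D.toPartialOrder
  obtain ⟨m, hum, hm⟩ := Set.Finite.exists_le_maximal (Set.toFinite {v | D.prox v s})
    (show u ∈ {v | D.prox v s} from hus)
  exact ⟨m, ⟨hm.prop, fun v hv hmv => D.le_antisymm _ _ (hm.le_of_ge hv hmv) hmv⟩, hum⟩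

theorem maxProx_of_adj {x y c : V} (h : D.dualGraph.Adj x y) (hcy : D.le c y)
    (hcx : ¬ D.le c x) : D.MaxProx y x := by
  rcases h.2 with hxy | hyx
  · exact absurd (D.le_trans _ _ _ hcy (le_of_prox hxy.1)) hcx
  · exact hyx

theorem mem_support_or_exists_shorter_walk {s q p y : V} (hsq : D.prox s q) (hp : D.pred s = p)
    (hyq : D.prox y q) (hsy : D.le s y) (w : D.dualGraph.Walk y p) :
    s ∈ w.support ∨ ∃ w' : D.dualGraph.Walk q p, w'.length < w.length ∧ w'.support ⊆ w.support := by
  by_cases hys : y = s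
  · subst hys
    simp
  have hs : s ≠ D.root := ne_root_of_prox hsq
  have hps : D.le p s := hp ▸ D.pred_le s hs
  obtain ⟨t, hts, htq, hty⟩ := exists_pred_eq_prox hyq hsy (Ne.symm hys) (not_le_of_prox hsq)
  have ht : t ≠ D.root := ne_root_of_prox htq
  have hst : D.le s t := hts ▸ D.pred_le t ht
  have htp : ¬ D.le t p := fun h =>
    (D.prox_gt s p (hp ▸ D.prox_pred s hs)).2 (D.le_antisymm _ _ hps (D.le_trans _ _ _ hst h)).symm
  obtain ⟨x, z, hxz, w₁, w₂, rfl, hw₁, hz⟩ := w.exists_eq_append_cons_boundary (D.le t) hty htp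
  have htx : D.le t x := hw₁ x w₁.end_mem_support
  have htz : D.prox t z := prox_of_le_of_not_le (maxProx_of_adj hxz.symm htx hz).1 htx hz
  obtain rfl | rfl : z = s ∨ z = q := by
    rcases D.prox_at_most_two t z s q htz (hts ▸ D.prox_pred t ht) htq with h | h | h
    · exact Or.inl h
    · exact absurd h (D.prox_gt s q hsq).2
    · exact Or.inr h
  · simp
  · exact Or.inr ⟨w₂, by simp; omega, fun v hv => by simp [hv]⟩

theorem mem_support_of_prox {s q p : V} (hsq : D.prox s q) (hp : D.pred s = p) (hqp : q ≠ p)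
    (w : D.dualGraph.Walk q p) : s ∈ w.support := by
  induction hn : w.length using Nat.strong_induction_on generalizing s q p with
  | _ n ih =>
    have hs : s ≠ D.root := ne_root_of_prox hsq
    have hpq : D.prox p q := hp ▸ D.prox_pred_prox s q hs hsq (hp ▸ hqp)
    obtain ⟨c, hcq, hc, hcp⟩ := exists_pred_eq_of_le (le_of_prox hpq) hqp
    have hc_prox : D.prox c q := hcq ▸ D.prox_pred c hc
    obtain ⟨x, y, hxy, w₁, w₂, rfl, hw₁, hy⟩ :=
      w.exists_eq_append_cons_boundary (fun v => ¬ D.le c v) (not_le_of_prox hc_prox)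
        (not_not.mpr hcp)
    have hcy : D.le c y := not_not.mp hy
    have hyx : D.MaxProx y x := maxProx_of_adj hxy hcy (hw₁ x w₁.end_mem_support)
    have hcx : D.prox c x := prox_of_le_of_not_le hyx.1 hcy (hw₁ x w₁.end_mem_support)
    obtain rfl : x = q := by
      by_contra hxq
      have hc_mem : c ∈ w₁.reverse.support := ih _ (by simp [← hn]) hcx hcq hxq w₁.reverse rfl
      exact hw₁ c (by simpa using hc_mem) (D.le_refl c)
    have hsy : D.le s y := by
      have hcs : D.le c s := D.le_trans _ _ _ hcp (hp ▸ D.pred_le s hs)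
      rcases le_total_of_prox hsq hyx.1 hc_prox hcs hcy with h | h
      · exact h
      · exact hyx.2 s hsq h ▸ D.le_refl s
    rcases mem_support_or_exists_shorter_walk hsq hp hyx.1 hsy w₂ with h | ⟨w', hw', hsub⟩
    · simp [h]
    · simp [hsub (ih _ (by simp [← hn]; omega) hsq hp hqp w' rfl)]

theorem exists_adj_of_prox {s w : V} (h : D.prox s w) :
    ∃ n, D.dualGraph.Adj s n ∧ (n = w ∨ ∃ t, D.pred t = s ∧ D.prox t w ∧ D.le t n) := by
  by_cases hmax : D.MaxProx s w
  · exact ⟨w, ⟨(D.prox_gt s w h).2, Or.inl hmax⟩, Or.inl rfl⟩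
  obtain ⟨u, huw, hsu, hus⟩ : ∃ u, D.prox u w ∧ D.le s u ∧ u ≠ s := by
    simpa [EnriquesDiagram.MaxProx, h] using hmax
  obtain ⟨t, hts, htw, htu⟩ := exists_pred_eq_prox huw hsu (Ne.symm hus) (not_le_of_prox h)
  have ht : t ≠ D.root := ne_root_of_prox htw
  obtain ⟨m, hm, htm⟩ := exists_maxProx_le (hts ▸ D.prox_pred t ht : D.prox t s)
  exact ⟨m, ⟨(D.prox_gt m s hm.1).2.symm, Or.inr hm⟩, Or.inr ⟨t, hts, htw, htm⟩⟩

end EnriquesDiagram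

open EnriquesDiagram

theorem stmt18_general {V : Type} [Fintype V] [DecidableEq V] (D : EnriquesDiagram V)
    (s u1 u2 : V) (h1 : D.prox s u1) (h2 : D.prox s u2) (h12 : u1 ≠ u2) :
    (∀ w : D.dualGraph.Walk u1 u2, w.IsPath → s ∈ w.support) ∧
    ¬ (∃ x, D.dualGraph.Adj s x ∧ x ≠ u1 ∧ x ≠ u2 ∧
        ∀ y, D.dualGraph.Adj s y → y = x) := by
  constructor
  · intro w _
    have hsp := D.prox_pred s (ne_root_of_prox h1)
    rcases D.prox_at_most_two s u1 (D.pred s) u2 h1 hsp h2 with h | h | h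
    · simpa using mem_support_of_prox h2 h.symm (Ne.symm h12) w.reverse
    · exact mem_support_of_prox h1 h h12 w
    · exact absurd h h12
  · rintro ⟨x, -, hx1, hx2, hx⟩
    obtain ⟨n₁, hn₁, rfl | ⟨t₁, ht₁s, ht₁, ht₁n⟩⟩ := exists_adj_of_prox h1
    · exact hx1 (hx _ hn₁).symm
    obtain ⟨n₂, hn₂, rfl | ⟨t₂, ht₂s, ht₂, ht₂n⟩⟩ := exists_adj_of_prox h2
    · exact hx2 (hx _ hn₂).symm
    have ht : t₁ = t₂ := eq_of_pred_eq_of_le_of_le (ht₁s.trans ht₂s.symm)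
      (ne_root_of_prox ht₁) (ne_root_of_prox ht₂)
      (hx _ hn₁ ▸ ht₁n) (hx _ hn₂ ▸ ht₂n)
    have hts : D.prox t₁ s := ht₁s ▸ D.prox_pred t₁ (ne_root_of_prox ht₁)
    rcases D.prox_at_most_two t₁ u1 u2 s ht₁ (ht ▸ ht₂) hts with h | h | h
    · exact h12 h
    · exact (D.prox_gt s u2 h2).2 h.symm
    · exact (D.prox_gt s u1 h1).2 h.symm

/-- If every extremal vertex of `D` is free, then every satellite vertex `s`,
proximate to `u₁` and `u₂`, lies on the chain of the dual graph between `u₁`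
and `u₂`; consequently `s` is not an end of `Γ_D` adjacent only to a vertex
outside `{u₁, u₂}`. -/
theorem stmt18 {V : Type} [Fintype V] [DecidableEq V] (D : EnriquesDiagram V)
    (hfree : ∀ p, D.Extremal p → D.Free p)
    (s u1 u2 : V) (h1 : D.prox s u1) (h2 : D.prox s u2) (h12 : u1 ≠ u2) :
    (∀ w : D.dualGraph.Walk u1 u2, w.IsPath → s ∈ w.support) ∧
    ¬ (∃ x, D.dualGraph.Adj s x ∧ x ≠ u1 ∧ x ≠ u2 ∧
        ∀ y, D.dualGraph.Adj s y → y = x) :=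
  stmt18_general D s u1 u2 h1 h2 h12
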